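/- The constant function u ≡ −ln(2)/2 is the unique bounded C² function u : ℍ → ℝ satisfying Δ_ℍ u = 2e^{2u} − 1 on ℍ. -/

import Mathlib

/-!
The function `φ = cosh (hypDist · i) = (|z|² + 1) / (2 Im z)` is a proper barrier on `ℍ` with
`Δ_ℍ φ = 2φ`. If `u` is `C²` and bounded above, `u - εφ` attains a maximum at some `z₀`, where
`Δ_ℍ u(z₀) ≤ εΔ_ℍ φ(z₀) = 2εφ(z₀)`; scaling `ε` against a point where `u` is almost `sup u` yields
points with `u(z₀) → sup u` and `Δ_ℍ u(z₀) ≤ δ → 0` (a maximum principle of Omori–Yau type).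
For a solution of `Δ_ℍ u = F(u)`, `F(x) = 2e^{2x} - 1`, this gives `F(sup u) ≤ 0`, and applied to
`-u` it gives `F(inf u) ≥ 0`. As `F` is strictly increasing and vanishes exactly at `-ln 2 / 2`,
`sup u ≤ -ln 2 / 2 ≤ inf u`.
-/

/-- The upper half-plane, as a subset of `ℂ`. -/
def UpperH : Set ℂ := {z : ℂ | 0 < z.im}

/-- The hyperbolic Laplacian of `u : ℂ → ℝ` at `z`:
`Δ_ℍ u(z) = (Im z)² (∂²u/∂x² + ∂²u/∂y²)(z)`. -/
noncomputable def hypLaplacian (u : ℂ → ℝ) (z : ℂ) : ℝ :=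
  z.im ^ 2 * (iteratedDeriv 2 (fun t : ℝ => u (z + (t : ℂ))) 0 +
              iteratedDeriv 2 (fun t : ℝ => u (z + (t : ℂ) * Complex.I)) 0)

/-- The hyperbolic distance on the upper half-plane. -/
noncomputable def hypDist (z w : ℂ) : ℝ :=
  2 * Real.arsinh (‖z - w‖ / (2 * Real.sqrt (z.im * w.im)))

open Complex Filter Topology Set

lemma isOpen_upperH : IsOpen UpperH := isOpen_lt continuous_const continuous_im

lemma iteratedDeriv_two_nonpos_of_isLocalMax {f : ℝ → ℝ} {x : ℝ} (hf : ContinuousAt f x)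
    (hmax : IsLocalMax f x) : iteratedDeriv 2 f x ≤ 0 := by
  -- if `f'' x > 0`, the second derivative test makes `x` a local minimum too, so `f` is
  -- locally constant near `x`
  by_contra! hpos
  rw [iteratedDeriv_succ, iteratedDeriv_one] at hpos
  have hmin : IsLocalMin f x := isLocalMin_of_deriv_deriv_pos hpos hmax.deriv_eq_zero hf
  have hconst : f =ᶠ[𝓝 x] fun _ => f x :=
    (hmax.and hmin).mono fun _ h => le_antisymm h.1 h.2
  have hderiv : deriv f =ᶠ[𝓝 x] fun _ => 0 :=
    hconst.eventuallyEq_nhds.mono fun _ h => by rw [h.deriv_eq, deriv_const]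
  rw [hderiv.deriv_eq, deriv_const] at hpos
  exact lt_irrefl _ hpos

lemma iteratedDeriv_two_eq_of_hasDerivAt {f f' : ℝ → ℝ} {x a : ℝ}
    (hf : ∀ᶠ t in 𝓝 x, HasDerivAt f (f' t) t) (hf' : HasDerivAt f' a x) :
    iteratedDeriv 2 f x = a := by
  have hderiv : deriv f =ᶠ[𝓝 x] f' := hf.mono fun _ h => h.deriv
  rw [iteratedDeriv_succ, iteratedDeriv_one, hderiv.deriv_eq, hf'.deriv]

section LineRestriction

variable {n : WithTop ℕ∞} {u : ℂ → ℝ} {z : ℂ}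

lemma ContDiffAt.comp_add_ofReal_mul (hu : ContDiffAt ℝ n u z) (a : ℂ) :
    ContDiffAt ℝ n (fun t : ℝ => u (z + t * a)) 0 := by
  have hu' : ContDiffAt ℝ n u (z + ((0 : ℝ) : ℂ) * a) := by simpa using hu
  exact hu'.comp (f := fun t : ℝ => z + t * a) 0
    (contDiff_const.add (ofRealCLM.contDiff.mul contDiff_const)).contDiffAt

lemma ContDiffAt.comp_add_ofReal (hu : ContDiffAt ℝ n u z) :
    ContDiffAt ℝ n (fun t : ℝ => u (z + t)) 0 := by
  simpa using hu.comp_add_ofReal_mul 1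

end LineRestriction

lemma hypLaplacian_neg (u : ℂ → ℝ) (z : ℂ) :
    hypLaplacian (fun w => -u w) z = -hypLaplacian u z := by
  simp only [hypLaplacian, iteratedDeriv_fun_neg]
  ring

lemma hypLaplacian_const_mul (c : ℝ) (u : ℂ → ℝ) (z : ℂ) :
    hypLaplacian (fun w => c * u w) z = c * hypLaplacian u z := by
  simp only [hypLaplacian, iteratedDeriv_const_mul_field]
  ring

lemma hypLaplacian_sub {u v : ℂ → ℝ} {z : ℂ} (hu : ContDiffAt ℝ 2 u z)
    (hv : ContDiffAt ℝ 2 v z) :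
    hypLaplacian (fun w => u w - v w) z = hypLaplacian u z - hypLaplacian v z := by
  simp only [hypLaplacian, iteratedDeriv_fun_sub hu.comp_add_ofReal hv.comp_add_ofReal,
    iteratedDeriv_fun_sub (hu.comp_add_ofReal_mul I) (hv.comp_add_ofReal_mul I)]
  ring

lemma hypLaplacian_nonpos_of_isLocalMax {u : ℂ → ℝ} {z : ℂ} (hu : ContinuousAt u z)
    (hmax : IsLocalMax u z) : hypLaplacian u z ≤ 0 := by
  have hline : ∀ a : ℂ, iteratedDeriv 2 (fun t : ℝ => u (z + t * a)) 0 ≤ 0 := fun a => by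
    have hγ : ContinuousAt (fun t : ℝ => z + t * a) 0 := by fun_prop
    have hu' : ContinuousAt u ((fun t : ℝ => z + t * a) 0) := by simpa using hu
    have hmax' : IsLocalMax u ((fun t : ℝ => z + t * a) 0) := by simpa using hmax
    exact iteratedDeriv_two_nonpos_of_isLocalMax (hu'.comp (f := fun t : ℝ => z + t * a) hγ)
      (hmax'.comp_continuous (g := fun t : ℝ => z + t * a) hγ)
  have hh := hline 1
  simp only [mul_one] at hh
  exact mul_nonpos_of_nonneg_of_nonpos (sq_nonneg _) (add_nonpos hh (hline I))

lemma hypLaplacian_le_of_isLocalMax_sub {u v : ℂ → ℝ} {z : ℂ} (hu : ContDiffAt ℝ 2 u z)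
    (hv : ContDiffAt ℝ 2 v z) (hmax : IsLocalMax (fun w => u w - v w) z) :
    hypLaplacian u z ≤ hypLaplacian v z := by
  have h := hypLaplacian_nonpos_of_isLocalMax (hu.sub hv).continuousAt hmax
  rw [hypLaplacian_sub hu hv] at h
  linarith

-- `coshDistI z = cosh (hypDist z I)`
noncomputable def coshDistI (z : ℂ) : ℝ := (normSq z + 1) / (2 * z.im)

lemma coshDistI_I : coshDistI I = 1 := by norm_num [coshDistI]

lemma one_le_coshDistI {z : ℂ} (hz : 0 < z.im) : 1 ≤ coshDistI z := by
  rw [coshDistI, one_le_div (by positivity), normSq_apply]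
  nlinarith [sq_nonneg z.re, sq_nonneg (z.im - 1)]

lemma contDiffAt_coshDistI {z : ℂ} (hz : z.im ≠ 0) : ContDiffAt ℝ 2 coshDistI z := by
  unfold coshDistI
  simp only [normSq_apply]
  have hre : ContDiff ℝ 2 re := reCLM.contDiff
  have him : ContDiff ℝ 2 im := imCLM.contDiff
  exact ((hre.mul hre).add (him.mul him) |>.add contDiff_const).contDiffAt.div
    (contDiff_const.mul him).contDiffAt (by simpa using hz)

lemma iteratedDeriv_coshDistI_add_ofReal {z : ℂ} (hz : z.im ≠ 0) :
    iteratedDeriv 2 (fun t : ℝ => coshDistI (z + t)) 0 = 1 / z.im := by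
  have hf : (fun t : ℝ => coshDistI (z + t)) =
      fun t => ((z.re + t) ^ 2 + z.im ^ 2 + 1) / (2 * z.im) := by
    ext t
    simp only [coshDistI, normSq_apply, add_re, ofReal_re, add_im, ofReal_im, add_zero]
    ring
  rw [hf]
  refine iteratedDeriv_two_eq_of_hasDerivAt (f' := fun t => (z.re + t) / z.im)
    (Eventually.of_forall fun t => ?_) ?_
  · have h := ((((hasDerivAt_id' t).const_add z.re).fun_pow 2).add_const (z.im ^ 2 + 1)).div_const
      (2 * z.im)
    refine (h.congr_deriv ?_).congr_of_eventuallyEq (Eventually.of_forall fun s => ?_)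
    · field_simp; ring
    · ring
  · simpa using ((hasDerivAt_id' (0 : ℝ)).const_add z.re).div_const z.im

lemma iteratedDeriv_coshDistI_add_ofReal_mul_I {z : ℂ} (hz : z.im ≠ 0) :
    iteratedDeriv 2 (fun t : ℝ => coshDistI (z + t * I)) 0 = (z.re ^ 2 + 1) / z.im ^ 3 := by
  have hf : (fun t : ℝ => coshDistI (z + t * I)) =
      fun t => (z.re ^ 2 + (z.im + t) ^ 2 + 1) / (2 * (z.im + t)) := by
    ext t
    simp only [coshDistI, normSq_apply, add_re, mul_re, ofReal_re, I_re, mul_zero, ofReal_im,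
      I_im, mul_one, sub_self, add_zero, add_im, mul_im]
    ring
  rw [hf]
  refine iteratedDeriv_two_eq_of_hasDerivAt
    (f' := fun t => 1 / 2 - (z.re ^ 2 + 1) / (2 * (z.im + t) ^ 2)) ?_ ?_
  · have hne : ∀ᶠ t : ℝ in 𝓝 0, z.im + t ≠ 0 :=
      (continuous_const.add continuous_id).continuousAt.eventually_ne (by simpa using hz)
    filter_upwards [hne] with t ht
    have hy : HasDerivAt (fun t : ℝ => z.im + t) 1 t := (hasDerivAt_id' t).const_add z.im
    refine ((((hy.fun_pow 2).const_add (z.re ^ 2)).add_const 1).div (hy.const_mul 2)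
      (by simpa using ht)).congr_deriv ?_
    field_simp
    ring
  · have hy : HasDerivAt (fun t : ℝ => z.im + t) 1 0 := (hasDerivAt_id' 0).const_add z.im
    refine (((hasDerivAt_const _ (z.re ^ 2 + 1)).div ((hy.fun_pow 2).const_mul 2)
      (by simpa using hz)).const_sub (1 / 2)).congr_deriv ?_
    simp only [add_zero]
    field_simp
    ring

lemma hypLaplacian_coshDistI {z : ℂ} (hz : z.im ≠ 0) :
    hypLaplacian coshDistI z = 2 * coshDistI z := by
  rw [hypLaplacian, iteratedDeriv_coshDistI_add_ofReal hz,
    iteratedDeriv_coshDistI_add_ofReal_mul_I hz, coshDistI, normSq_apply]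
  field_simp
  ring

lemma continuousOn_coshDistI : ContinuousOn coshDistI UpperH := fun _ hz =>
  (contDiffAt_coshDistI (ne_of_gt hz)).continuousAt.continuousWithinAt

lemma exists_isMaxOn_sub_mul_coshDistI {g : ℂ → ℝ} (hg : ContinuousOn g UpperH)
    (hbdd : BddAbove (g '' UpperH)) {ε : ℝ} (hε : 0 < ε) :
    ∃ z₀ ∈ UpperH, IsMaxOn (fun z => g z - ε * coshDistI z) UpperH z₀ := by
  obtain ⟨M, hM⟩ := hbdd
  have hgM : ∀ z ∈ UpperH, g z ≤ M := fun z hz => hM ⟨z, hz, rfl⟩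
  have hI : I ∈ UpperH := by simp [UpperH]
  set R := (M - g I) / ε + 1 with hR
  have hR1 : 1 ≤ R := by
    have := div_nonneg (sub_nonneg.2 (hgM I hI)) hε.le
    linarith
  -- `K = {z ∈ ℍ | coshDistI z ≤ R}`, written as a closed subset of `ℂ`; off `K` the function
  -- is below its value at `I`
  set K := {z : ℂ | normSq z + 1 ≤ 2 * R * z.im} with hK
  have hKU : K ⊆ UpperH := fun z hz => by
    have : 0 < 2 * R * z.im := lt_of_lt_of_le (by linarith [normSq_nonneg z]) hz
    exact pos_of_mul_pos_right this (by positivity)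
  have hIK : I ∈ K := by
    change normSq I + 1 ≤ 2 * R * I.im
    rw [normSq_I, I_im]
    linarith
  have hKcompact : IsCompact K := by
    refine (isCompact_closedBall (0 : ℂ) (2 * R)).of_isClosed_subset
      (isClosed_le (by fun_prop) (by fun_prop)) fun z hz => ?_
    have hz' : ‖z‖ ^ 2 ≤ 2 * R * ‖z‖ := by
      rw [← normSq_eq_norm_sq]
      nlinarith [hz.out, abs_im_le_norm z, le_abs_self z.im]
    rw [mem_closedBall_zero_iff]
    nlinarith [norm_nonneg z]
  obtain ⟨z₀, hz₀K, hmax⟩ := hKcompact.exists_isMaxOn ⟨I, hIK⟩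
    ((hg.sub (continuousOn_const.mul continuousOn_coshDistI)).mono hKU)
  refine ⟨z₀, hKU hz₀K, fun z hz => ?_⟩
  by_cases hzK : z ∈ K
  · exact hmax hzK
  · have hRz : R < coshDistI z := by
      have hz' : 0 < z.im := hz
      rw [coshDistI, lt_div_iff₀ (by positivity)]
      simpa [hK, mul_comm, mul_assoc, mul_left_comm] using hzK
    calc g z - ε * coshDistI z ≤ M - ε * R := by
          have := mul_lt_mul_of_pos_left hRz hε
          linarith [hgM z hz]
      _ = g I - ε * coshDistI I := by
          rw [coshDistI_I, hR]
          field_simp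
          ring
      _ ≤ g z₀ - ε * coshDistI z₀ := hmax hIK

lemma hypLaplacian_const (c : ℝ) (z : ℂ) : hypLaplacian (fun _ => c) z = 0 := by
  simp [hypLaplacian, iteratedDeriv_const]

lemma exists_sSup_sub_lt_and_hypLaplacian_le {u : ℂ → ℝ} (hu : ContDiffOn ℝ 2 u UpperH)
    (hbdd : BddAbove (u '' UpperH)) {δ : ℝ} (hδ : 0 < δ) :
    ∃ z ∈ UpperH, sSup (u '' UpperH) - δ < u z ∧ hypLaplacian u z ≤ δ := by
  set S := sSup (u '' UpperH)
  have hne : (u '' UpperH).Nonempty := Nonempty.image u ⟨I, by simp [UpperH]⟩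
  obtain ⟨_, ⟨z₁, hz₁, rfl⟩, hz₁S⟩ := exists_lt_of_lt_csSup hne (sub_lt_self S (by positivity : 0 < δ / 4))
  have hφ₁ : 0 < coshDistI z₁ := one_pos.trans_le (one_le_coshDistI hz₁)
  -- the barrier is scaled so that it costs exactly `δ / 4` at `z₁`
  set ε := δ / (4 * coshDistI z₁) with hεdef
  have hε : 0 < ε := by positivity
  have hεφ₁ : ε * coshDistI z₁ = δ / 4 := by rw [hεdef]; field_simp
  obtain ⟨z₀, hz₀, hmax⟩ := exists_isMaxOn_sub_mul_coshDistI hu.continuousOn hbdd hε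
  have hz₀S : u z₀ ≤ S := le_csSup hbdd ⟨z₀, hz₀, rfl⟩
  have hεφ₀ : 0 ≤ ε * coshDistI z₀ := mul_nonneg hε.le (zero_le_one.trans (one_le_coshDistI hz₀))
  have h₁₀ : u z₁ - ε * coshDistI z₁ ≤ u z₀ - ε * coshDistI z₀ := hmax hz₁
  refine ⟨z₀, hz₀, by linarith, ?_⟩
  have hz₀' : z₀.im ≠ 0 := ne_of_gt hz₀
  have hloc : IsLocalMax (fun z => u z - ε * coshDistI z) z₀ :=
    hmax.isLocalMax (isOpen_upperH.mem_nhds hz₀)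
  calc hypLaplacian u z₀ ≤ hypLaplacian (fun z => ε * coshDistI z) z₀ :=
        hypLaplacian_le_of_isLocalMax_sub (hu.contDiffAt (isOpen_upperH.mem_nhds hz₀))
          (contDiffAt_const.mul (contDiffAt_coshDistI hz₀')) hloc
    _ = 2 * (ε * coshDistI z₀) := by
        rw [hypLaplacian_const_mul, hypLaplacian_coshDistI hz₀']
        ring
    _ ≤ δ := by linarith

lemma apply_sSup_nonpos_of_le_hypLaplacian {u : ℂ → ℝ} {F : ℝ → ℝ}
    (hu : ContDiffOn ℝ 2 u UpperH) (hbdd : BddAbove (u '' UpperH))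
    (hF : ContinuousAt F (sSup (u '' UpperH)))
    (hsub : ∀ z ∈ UpperH, F (u z) ≤ hypLaplacian u z) : F (sSup (u '' UpperH)) ≤ 0 := by
  set S := sSup (u '' UpperH)
  by_contra! hpos
  obtain ⟨η, hη, hηF⟩ :=
    Metric.eventually_nhds_iff.1 (hF.eventually (lt_mem_nhds (half_lt_self hpos)))
  obtain ⟨z, hz, hzS, hΔ⟩ :=
    exists_sSup_sub_lt_and_hypLaplacian_le hu hbdd (δ := min η (F S / 2)) (by positivity)
  have hzS' : u z ≤ S := le_csSup hbdd ⟨z, hz, rfl⟩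
  have hFz : F S / 2 < F (u z) := hηF (by
    rw [Real.dist_eq, abs_lt]
    constructor <;> linarith [min_le_left η (F S / 2)])
  linarith [hsub z hz, min_le_right η (F S / 2)]

theorem eq_of_hypLaplacian_eq_of_strictMono {F : ℝ → ℝ} {c : ℝ} (hF : Continuous F)
    (hFmono : StrictMono F) (hFc : F c = 0) {u : ℂ → ℝ} (hu : ContDiffOn ℝ 2 u UpperH)
    (hbdd : ∃ M, ∀ z ∈ UpperH, |u z| ≤ M) (heq : ∀ z ∈ UpperH, hypLaplacian u z = F (u z)) :
    ∀ z ∈ UpperH, u z = c := by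
  obtain ⟨M, hM⟩ := hbdd
  have hbdd_u : BddAbove (u '' UpperH) :=
    ⟨M, forall_mem_image.2 fun z hz => (le_abs_self _).trans (hM z hz)⟩
  have hbdd_neg : BddAbove ((fun z => -u z) '' UpperH) :=
    ⟨M, forall_mem_image.2 fun z hz => (neg_le_abs _).trans (hM z hz)⟩
  have hsup := apply_sSup_nonpos_of_le_hypLaplacian hu hbdd_u hF.continuousAt
    fun z hz => (heq z hz).ge
  -- the infimum is handled by the supremum of `-u`, a subsolution for `x ↦ -F (-x)`
  have hinf := apply_sSup_nonpos_of_le_hypLaplacian (F := fun x => -F (-x)) hu.neg hbdd_neg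
    (by fun_prop) fun z hz => by simp [hypLaplacian_neg, heq z hz]
  intro z hz
  apply le_antisymm
  · calc u z ≤ sSup (u '' UpperH) := le_csSup hbdd_u ⟨z, hz, rfl⟩
      _ ≤ c := hFmono.le_iff_le.1 (hFc ▸ hsup)
  · calc c ≤ -sSup ((fun z => -u z) '' UpperH) := hFmono.le_iff_le.1 (by linarith)
      _ ≤ u z := neg_le.1 (le_csSup hbdd_neg ⟨z, hz, rfl⟩)

/-- The constant function `−ln(2)/2` is the unique bounded `C²` solution of
`Δ_ℍ u = 2e^{2u} − 1` on the upper half-plane. -/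
theorem gauss_equation_f_zero :
    (ContDiffOn ℝ 2 (fun _ : ℂ => -Real.log 2 / 2) UpperH ∧
      (∃ M : ℝ, ∀ z ∈ UpperH, |(-Real.log 2 / 2 : ℝ)| ≤ M) ∧
      ∀ z ∈ UpperH,
        hypLaplacian (fun _ : ℂ => -Real.log 2 / 2) z =
          2 * Real.exp (2 * (-Real.log 2 / 2)) - 1) ∧
    ∀ u : ℂ → ℝ,
      ContDiffOn ℝ 2 u UpperH →
      (∃ M : ℝ, ∀ z ∈ UpperH, |u z| ≤ M) →
      (∀ z ∈ UpperH, hypLaplacian u z = 2 * Real.exp (2 * u z) - 1) →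
      ∀ z ∈ UpperH, u z = -Real.log 2 / 2 := by
  have hc : 2 * Real.exp (2 * (-Real.log 2 / 2)) - 1 = 0 := by
    rw [show 2 * (-Real.log 2 / 2) = -Real.log 2 by ring, Real.exp_neg, Real.exp_log two_pos]
    norm_num
  have hmono : StrictMono fun x : ℝ => 2 * Real.exp (2 * x) - 1 := fun x y hxy => by
    simp only
    gcongr
  refine ⟨⟨contDiffOn_const, ⟨_, fun _ _ => le_rfl⟩, fun z _ => by rw [hypLaplacian_const, hc]⟩,
    fun u hu hbdd heq => ?_⟩
  exact eq_of_hypLaplacian_eq_of_strictMono (by fun_prop) hmono hc hu hbdd heq
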